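/- For every t > 0, the cumulative distribution function of S = min(X1, X2) satisfies P(min(X1, X2) ≤ t) = G(t)^(α1+α3) + G(t)^(α2+α3) - G(t)^(α1+α2+α3). -/

import Mathlib

open Real MeasureTheory ProbabilityTheory

/-- Base CDF of the exponentiated generalized Weibull–Gompertz distribution. -/
noncomputable def G (a b c d x : ℝ) : ℝ :=
  1 - Real.exp (-(a * x ^ b * (Real.exp (c * x ^ d) - 1)))

/-! With `Bᵢ = {Uᵢ ≤ t}` the event `{min X₁ X₂ ≤ t}` is `(B₀ ∪ B₁) ∩ B₂`; inclusion–exclusion and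
independence express its probability through `P(Bᵢ) = G(t)^αᵢ`, and since `G(t) > 0` the real
powers multiply by adding exponents. -/

lemma G_pos {a c x : ℝ} (b d : ℝ) (ha : 0 < a) (hc : 0 < c) (hx : 0 < x) :
    0 < G a b c d x := by
  have hexp : 1 < Real.exp (c * x ^ d) := Real.one_lt_exp_iff.mpr (by positivity)
  have hrate : 0 < a * x ^ b * (Real.exp (c * x ^ d) - 1) := by
    have := sub_pos.mpr hexp
    positivity
  simpa [G] using hrate

namespace ProbabilityTheory

variable {Ω ι β : Type*} [MeasurableSpace Ω] [MeasurableSpace β] {μ : Measure Ω}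

lemma iIndepFun.iIndepSet_preimage {f : ι → Ω → β} (hf : iIndepFun f μ)
    (hf_meas : ∀ i, Measurable (f i)) {t : ι → Set β} (ht : ∀ i, MeasurableSet (t i)) :
    iIndepSet (fun i ↦ f i ⁻¹' t i) μ :=
  (iIndepSet_iff_meas_biInter fun i ↦ hf_meas i (ht i)).2 fun _ ↦
    hf.meas_biInter fun i _ ↦ ⟨t i, ht i, rfl⟩

variable {s : ι → Set Ω}

lemma iIndepSet.measureReal_inter_of_ne (h : iIndepSet s μ) {i j : ι} (hij : i ≠ j) :
    μ.real (s i ∩ s j) = μ.real (s i) * μ.real (s j) := by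
  classical
  have := h.meas_biInter {i, j}
  simp only [Finset.set_biInter_insert, Finset.set_biInter_singleton,
    Finset.prod_pair hij] at this
  simp only [measureReal_def, this, ENNReal.toReal_mul]

lemma iIndepSet.measureReal_inter_inter_of_ne (h : iIndepSet s μ) {i j k : ι} (hij : i ≠ j)
    (hik : i ≠ k) (hjk : j ≠ k) :
    μ.real (s i ∩ s j ∩ s k) = μ.real (s i) * μ.real (s j) * μ.real (s k) := by
  classical
  have := h.meas_biInter {i, j, k}
  simp only [Finset.set_biInter_insert, Finset.set_biInter_singleton] at this
  rw [Finset.prod_insert (by simp [hij, hik]), Finset.prod_pair hjk] at this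
  simp only [measureReal_def, Set.inter_assoc, this, ENNReal.toReal_mul, mul_assoc]

lemma iIndepSet.measureReal_union_inter (h : iIndepSet s μ) (hs : ∀ i, MeasurableSet (s i))
    {i j k : ι} (hij : i ≠ j) (hik : i ≠ k) (hjk : j ≠ k) :
    μ.real ((s i ∪ s j) ∩ s k) = μ.real (s i) * μ.real (s k) + μ.real (s j) * μ.real (s k)
      - μ.real (s i) * μ.real (s j) * μ.real (s k) := by
  have := h.isProbabilityMeasure
  have hmeet : (s i ∩ s k) ∩ (s j ∩ s k) = s i ∩ s j ∩ s k := by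
    ext; simp only [Set.mem_inter_iff]; tauto
  have hincl := measureReal_union_add_inter (μ := μ) (s := s i ∩ s k) ((hs j).inter (hs k))
  rw [hmeet] at hincl
  rw [Set.union_inter_distrib_right, ← h.measureReal_inter_of_ne hik,
    ← h.measureReal_inter_of_ne hjk, ← h.measureReal_inter_inter_of_ne hij hik hjk]
  linarith

end ProbabilityTheory

theorem stmt_7_general {Ω : Type*} [MeasureSpace Ω] [IsProbabilityMeasure (ℙ : Measure Ω)]
    (a b c d : ℝ) (ha : 0 < a) (hc : 0 < c)
    (α : Fin 3 → ℝ)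
    (U : Fin 3 → Ω → ℝ) (hmeas : ∀ i, Measurable (U i))
    (hindep : iIndepFun U ℙ)
    (hcdf : ∀ i, ∀ x : ℝ, 0 < x →
      (ℙ {ω | U i ω ≤ x}).toReal = (G a b c d x) ^ (α i))
    (t : ℝ) (ht : 0 < t) :
    (ℙ {ω | min (max (U 0 ω) (U 2 ω)) (max (U 1 ω) (U 2 ω)) ≤ t}).toReal =
      (G a b c d t) ^ (α 0 + α 2) + (G a b c d t) ^ (α 1 + α 2) -
        (G a b c d t) ^ (α 0 + α 1 + α 2) := by
  have hG := G_pos b d ha hc ht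
  have hB := hindep.iIndepSet_preimage hmeas fun _ ↦ measurableSet_Iic (a := t)
  have hevent : {ω | min (max (U 0 ω) (U 2 ω)) (max (U 1 ω) (U 2 ω)) ≤ t} =
      (U 0 ⁻¹' Set.Iic t ∪ U 1 ⁻¹' Set.Iic t) ∩ U 2 ⁻¹' Set.Iic t := by
    ext ω
    simp only [Set.mem_ofPred_eq, min_le_iff, max_le_iff, Set.mem_inter_iff, Set.mem_union,
      Set.mem_preimage, Set.mem_Iic]
    tauto
  have hcdf_t : ∀ i, (ℙ : Measure Ω).real (U i ⁻¹' Set.Iic t) = G a b c d t ^ α i :=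
    fun i ↦ hcdf i t ht
  rw [← measureReal_def, hevent,
    hB.measureReal_union_inter (fun i ↦ hmeas i measurableSet_Iic) (by decide) (by decide)
      (by decide),
    hcdf_t, hcdf_t, hcdf_t]
  simp only [rpow_add hG]

theorem stmt_7 {Ω : Type*} [MeasureSpace Ω] [IsProbabilityMeasure (ℙ : Measure Ω)]
    (a b c d : ℝ) (ha : 0 < a) (hb : 0 < b) (hc : 0 < c) (hd : 0 < d)
    (α : Fin 3 → ℝ) (hα : ∀ i, 0 < α i)
    (U : Fin 3 → Ω → ℝ) (hmeas : ∀ i, Measurable (U i))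
    (hindep : iIndepFun U ℙ)
    (hcdf : ∀ i, ∀ x : ℝ, 0 < x →
      (ℙ {ω | U i ω ≤ x}).toReal = (G a b c d x) ^ (α i))
    (hcdf0 : ∀ i, ∀ x : ℝ, x ≤ 0 → ℙ {ω | U i ω ≤ x} = 0)
    (t : ℝ) (ht : 0 < t) :
    (ℙ {ω | min (max (U 0 ω) (U 2 ω)) (max (U 1 ω) (U 2 ω)) ≤ t}).toReal =
      (G a b c d t) ^ (α 0 + α 2) + (G a b c d t) ^ (α 1 + α 2) -
        (G a b c d t) ^ (α 0 + α 1 + α 2) :=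
  stmt_7_general a b c d ha hc α U hmeas hindep hcdf t ht
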